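/- The graph G_k is an induced subgraph of an ABC graph: one can extend the cliques A and C of G_k by new vertices to cliques A' and C' of size k⁴ such that the edges between A' and B form a half graph, the edges between B and C' form a half graph, and there are no edges between A' and C'. -/

import Mathlib

open Finset
open scoped Classical

variable {V : Type*}

/-- `sdPair G x y`: the number of vertices other than `x, y` adjacent to exactly
one of `x` and `y`. -/
noncomputable def sdPair [Fintype V] (G : SimpleGraph V) (x y : V) : ℕ :=
  (univ.filter fun z => z ≠ x ∧ z ≠ y ∧ ¬(G.Adj z x ↔ G.Adj z y)).card

/-- The set `B = ⋃_{i,j ∈ [k]} B_{ij} ⊆ ℤ²`, where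
`B₁₁ = {(pk − q, qk + p) : 1 ≤ p ≤ k, 0 ≤ q ≤ k − 1}` and
`B_{ij} = B₁₁ + ((i−1)k², (j−1)k²)`. -/
noncomputable def Bset (k : ℕ) : Finset (ℤ × ℤ) :=
  ((Finset.Icc (1 : ℤ) k ×ˢ Finset.Icc (0 : ℤ) ((k : ℤ) - 1)) ×ˢ
      (Finset.Icc (1 : ℤ) k ×ˢ Finset.Icc (1 : ℤ) k)).image
    fun x => (x.1.1 * k - x.1.2 + (x.2.1 - 1) * (k : ℤ) ^ 2,
              x.1.2 * k + x.1.1 + (x.2.2 - 1) * (k : ℤ) ^ 2)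

/-- Vertices of the graph `G_k`: the clique `A = {a_1, …, a_{k³}}`, the clique `B`
(one vertex for each point of `Bset k`), and the clique `C = {c_1, …, c_{k³}}`.
Here `Fin (k^3)` index `i` represents `a_{i+1}` (resp. `c_{i+1}`). -/
abbrev GkVtx (k : ℕ) := Fin (k ^ 3) ⊕ ({ b : ℤ × ℤ // b ∈ Bset k } ⊕ Fin (k ^ 3))

/-- The underlying relation of `G_k`: `A`, `B`, `C` are cliques, `a_i` is adjacent
to `(b_x, b_y) ∈ B` iff `i < b_x`, `(b_x, b_y)` is adjacent to `c_j` iff `b_y < j`,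
and there are no `A`–`C` edges. -/
def GkRel (k : ℕ) : GkVtx k → GkVtx k → Prop
  | Sum.inl i, Sum.inl j => i ≠ j
  | Sum.inl i, Sum.inr (Sum.inl b) => (i : ℤ) + 1 < b.1.1
  | Sum.inr (Sum.inl b), Sum.inr (Sum.inl b') => b ≠ b'
  | Sum.inr (Sum.inl b), Sum.inr (Sum.inr j) => b.1.2 < (j : ℤ) + 1
  | Sum.inr (Sum.inr i), Sum.inr (Sum.inr j) => i ≠ j
  | _, _ => False

/-- The graph `G_k`. -/
def Gk (k : ℕ) : SimpleGraph (GkVtx k) := SimpleGraph.fromRel (GkRel k)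

/-!
The middle clique is numbered twice: by `rankX b = (b_x - 1) k + ⌊(b_y - 1) / k²⌋`, which sorts `B`
by `b_x`, and by `rankY b = (b_y - 1) k + ⌊(b_x - 1) / k²⌋`, which sorts it by `b_y`. In base `k`
a point of `B` has `b_x - 1 = (i, u, v)` and `b_y - 1 = (j, k - 1 - v, u)`, so its two ranks have
the digits `(i, u, v, j)` and `(j, k - 1 - v, u, i)`; both are therefore bijections onto `[0, k⁴)`.
Placing `B` at `rankX` in the middle part, `a_{i+1}` at `i k + k - 1` and `c_{j+1}` at `j k`, and
taking `β = rankY ∘ rankX⁻¹`, the conditions `i + 1 < b_x` and `b_y < j + 1` become the two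
half-graph adjacencies.
-/

lemma Int.mul_add_mem_Ico {k m x d : ℤ} (hx : x ∈ Set.Ico 0 m) (hd : d ∈ Set.Ico 0 k) :
    x * k + d ∈ Set.Ico 0 (m * k) := by
  obtain ⟨hx0, hxm⟩ := hx
  obtain ⟨hd0, hdk⟩ := hd
  constructor <;> nlinarith

lemma Int.sub_one_sub_mem_Ico {k q : ℤ} (hq : q ∈ Set.Ico 0 k) : k - 1 - q ∈ Set.Ico 0 k := by
  obtain ⟨h0, h1⟩ := hq
  constructor <;> omega

lemma Int.mul_add_eq_mul_add_iff {k x x' d d' : ℤ} (hd : d ∈ Set.Ico 0 k)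
    (hd' : d' ∈ Set.Ico 0 k) : x * k + d = x' * k + d' ↔ x = x' ∧ d = d' := by
  have hk : k ≠ 0 := (hd.1.trans_lt hd.2).ne'
  have hdiv : ∀ {x d : ℤ}, d ∈ Set.Ico 0 k → (x * k + d) / k = x := fun hd => by
    rw [add_comm, Int.add_mul_ediv_right _ _ hk, Int.ediv_eq_zero_of_lt hd.1 hd.2, zero_add]
  refine ⟨fun h => ?_, fun ⟨hx, hd⟩ => hx ▸ hd ▸ rfl⟩
  have hx : x = x' := by rw [← hdiv (x := x) hd, h, hdiv hd']
  exact ⟨hx, by rw [hx] at h; linarith⟩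

lemma Int.mul_add_ediv_sq {k c e f : ℤ} (he : e ∈ Set.Ico 0 k) (hf : f ∈ Set.Ico 0 k) :
    ((c * k + e) * k + f) / k ^ 2 = c := by
  have hef := Int.mul_add_mem_Ico he hf
  rw [show (c * k + e) * k + f = (e * k + f) + c * k ^ 2 by ring,
    Int.add_mul_ediv_right _ _ (pow_ne_zero 2 (he.1.trans_lt he.2).ne'),
    Int.ediv_eq_zero_of_lt hef.1 (by linarith [hef.2]), zero_add]

lemma Int.mul_add_sub_one_lt_mul_add_iff {k i x d : ℤ} (hd : d ∈ Set.Ico 0 k) :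
    i * k + (k - 1) < x * k + d ↔ i < x := by
  obtain ⟨hd0, hdk⟩ := hd
  constructor
  · intro h
    by_contra! hxi
    nlinarith
  · intro h
    nlinarith

lemma Int.mul_add_lt_mul_iff {k j x d : ℤ} (hd : d ∈ Set.Ico 0 k) :
    x * k + d < j * k ↔ x < j := by
  obtain ⟨hd0, hdk⟩ := hd
  constructor
  · intro h
    by_contra! hxj
    nlinarith
  · intro h
    nlinarith

lemma Int.eq_of_four_digits_eq {k a b c d a' b' c' d' : ℤ} (hb : b ∈ Set.Ico 0 k)
    (hc : c ∈ Set.Ico 0 k) (hd : d ∈ Set.Ico 0 k) (hb' : b' ∈ Set.Ico 0 k)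
    (hc' : c' ∈ Set.Ico 0 k) (hd' : d' ∈ Set.Ico 0 k)
    (h : ((a * k + b) * k + c) * k + d = ((a' * k + b') * k + c') * k + d') :
    a = a' ∧ b = b' ∧ c = c' ∧ d = d' := by
  obtain ⟨h₁, rfl⟩ := (Int.mul_add_eq_mul_add_iff hd hd').mp h
  obtain ⟨h₂, rfl⟩ := (Int.mul_add_eq_mul_add_iff hc hc').mp h₁
  obtain ⟨rfl, rfl⟩ := (Int.mul_add_eq_mul_add_iff hb hb').mp h₂
  exact ⟨rfl, rfl, rfl, rfl⟩

lemma Int.four_digits_mem_Ico {k a b c d : ℤ} (ha : a ∈ Set.Ico 0 k) (hb : b ∈ Set.Ico 0 k)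
    (hc : c ∈ Set.Ico 0 k) (hd : d ∈ Set.Ico 0 k) :
    ((a * k + b) * k + c) * k + d ∈ Set.Ico 0 (k ^ 4) := by
  rw [show k ^ 4 = k * k * k * k by ring]
  exact Int.mul_add_mem_Ico (Int.mul_add_mem_Ico (Int.mul_add_mem_Ico ha hb) hc) hd

lemma Nat.mul_add_sub_one_lt_mul {k i m : ℕ} (hk : 0 < k) (hi : i < m) :
    i * k + (k - 1) < m * k := by
  have : (i + 1) * k ≤ m * k := Nat.mul_le_mul_right k hi
  rw [add_mul, one_mul] at this
  omega

lemma Finset.exists_equiv_fin_of_injOn {α : Type*} {S : Finset α} {n : ℕ} (hS : S.card = n)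
    {f : α → ℤ} (hf : Set.InjOn f S) (hmem : ∀ x ∈ S, f x ∈ Set.Ico 0 (n : ℤ)) :
    ∃ e : S ≃ Fin n, ∀ x, (e x : ℤ) = f x := by
  let g : S → Fin n := fun x =>
    ⟨(f x).toNat, by obtain ⟨h0, hn⟩ := hmem x x.2; omega⟩
  have hg : ∀ x, ((g x : ℕ) : ℤ) = f x := fun x => Int.toNat_of_nonneg (hmem x x.2).1
  have hg_inj : g.Injective := fun x y h =>
    Subtype.ext (hf x.2 y.2 (by rw [← hg, ← hg, h]))
  exact ⟨.ofBijective g ((Fintype.bijective_iff_injective_and_card g).mpr ⟨hg_inj, by simp [hS]⟩),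
    hg⟩

section ABCGraph

variable {n : ℕ}

def abcGraph (β : Equiv.Perm (Fin n)) : SimpleGraph (Fin 3 × Fin n) :=
  SimpleGraph.fromRel fun u v => (u.1 = v.1 ∧ u.2 ≠ v.2) ∨ (u.1 = 0 ∧ v.1 = 1 ∧ u.2 < v.2) ∨
    (u.1 = 1 ∧ v.1 = 2 ∧ β u.2 < v.2)

variable (β : Equiv.Perm (Fin n))

lemma abcGraph_adj_same (m : Fin 3) (i j : Fin n) :
    (abcGraph β).Adj (m, i) (m, j) ↔ i ≠ j := by
  simp [abcGraph]
  tauto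

lemma abcGraph_adj_zero_one (i j : Fin n) : (abcGraph β).Adj (0, i) (1, j) ↔ i < j := by
  simp [abcGraph]

lemma abcGraph_adj_one_two (i j : Fin n) : (abcGraph β).Adj (1, i) (2, j) ↔ β i < j := by
  simp [abcGraph]

lemma abcGraph_not_adj_zero_two (i j : Fin n) : ¬ (abcGraph β).Adj (0, i) (2, j) := by
  simp [abcGraph]

end ABCGraph

section CliqueChain

variable {A B C : Type*}

def cliqueChainRel (P : A → B → Prop) (Q : B → C → Prop) : A ⊕ (B ⊕ C) → A ⊕ (B ⊕ C) → Prop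
  | .inl a, .inl a' => a ≠ a'
  | .inl a, .inr (.inl b) => P a b
  | .inr (.inl b), .inr (.inl b') => b ≠ b'
  | .inr (.inl b), .inr (.inr c) => Q b c
  | .inr (.inr c), .inr (.inr c') => c ≠ c'
  | _, _ => False

def cliqueChain (P : A → B → Prop) (Q : B → C → Prop) : SimpleGraph (A ⊕ (B ⊕ C)) :=
  SimpleGraph.fromRel (cliqueChainRel P Q)

theorem cliqueChain.exists_embedding_abcGraph {n : ℕ} {P : A → B → Prop} {Q : B → C → Prop}
    {fA : A → Fin n} {fC : C → Fin n} (hA : fA.Injective) (hC : fC.Injective) (r s : B ≃ Fin n)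
    (hP : ∀ a b, P a b ↔ fA a < r b) (hQ : ∀ b c, Q b c ↔ s b < fC c) :
    ∃ φ : cliqueChain P Q ↪g abcGraph (r.symm.trans s),
      (∀ a, φ (.inl a) = (0, fA a)) ∧ (∀ b, φ (.inr (.inl b)) = (1, r b)) ∧
        ∀ c, φ (.inr (.inr c)) = (2, fC c) := by
  let f : A ⊕ (B ⊕ C) → Fin 3 × Fin n
    | .inl a => (0, fA a)
    | .inr (.inl b) => (1, r b)
    | .inr (.inr c) => (2, fC c)
  have hf : f.Injective := by
    rintro (a | b | c) (a' | b' | c') h <;> simp [f, hA.eq_iff, hC.eq_iff] at h ⊢ <;> exact h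
  refine ⟨⟨⟨f, hf⟩, fun {u v} => ?_⟩, fun _ => rfl, fun _ => rfl, fun _ => rfl⟩
  rcases u with a | b | c <;> rcases v with a' | b' | c' <;>
    simp [f, cliqueChain, cliqueChainRel, abcGraph, hP, hQ, hA.eq_iff, hC.eq_iff]

end CliqueChain

lemma Gk_eq_cliqueChain (k : ℕ) :
    Gk k = cliqueChain (fun (i : Fin (k ^ 3)) (b : {b // b ∈ Bset k}) => (i : ℤ) + 1 < b.1.1)
      (fun b (j : Fin (k ^ 3)) => b.1.2 < (j : ℤ) + 1) := by
  refine congrArg SimpleGraph.fromRel (funext₂ fun u v => ?_)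
  rcases u with _ | _ | _ <;> rcases v with _ | _ | _ <;> rfl

section Bset

variable {k : ℕ}

def bParam (k : ℕ) (x : (ℤ × ℤ) × (ℤ × ℤ)) : ℤ × ℤ :=
  (x.1.1 * k - x.1.2 + (x.2.1 - 1) * (k : ℤ) ^ 2, x.1.2 * k + x.1.1 + (x.2.2 - 1) * (k : ℤ) ^ 2)

noncomputable def bBox (k : ℕ) : Finset ((ℤ × ℤ) × (ℤ × ℤ)) :=
  (Icc (1 : ℤ) k ×ˢ Icc (0 : ℤ) ((k : ℤ) - 1)) ×ˢ (Icc (1 : ℤ) k ×ˢ Icc (1 : ℤ) k)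

lemma Bset_eq_image : Bset k = (bBox k).image (bParam k) := rfl

lemma card_bBox : (bBox k).card = k ^ 4 := by
  simp only [bBox, card_product, Int.card_Icc]
  rw [show ((k : ℤ) + 1 - 1).toNat = k by omega, show ((k : ℤ) - 1 + 1 - 0).toNat = k by omega]
  ring

lemma mem_bBox {p q i j : ℤ} :
    ((p, q), (i, j)) ∈ bBox k ↔ p - 1 ∈ Set.Ico 0 (k : ℤ) ∧ q ∈ Set.Ico 0 (k : ℤ) ∧
      i - 1 ∈ Set.Ico 0 (k : ℤ) ∧ j - 1 ∈ Set.Ico 0 (k : ℤ) := by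
  simp only [bBox, mem_product, mem_Icc, Set.mem_Ico]
  omega

lemma bParam_fst_sub_one (p q i j : ℤ) :
    (bParam k ((p, q), (i, j))).1 - 1 = ((i - 1) * k + (p - 1)) * k + (k - 1 - q) := by
  simp only [bParam]
  ring

lemma bParam_snd_sub_one (p q i j : ℤ) :
    (bParam k ((p, q), (i, j))).2 - 1 = ((j - 1) * k + q) * k + (p - 1) := by
  simp only [bParam]
  ring

lemma Bset_fst_sub_one_ediv_mem_Ico {b : ℤ × ℤ} (hb : b ∈ Bset k) :
    (b.1 - 1) / (k : ℤ) ^ 2 ∈ Set.Ico 0 (k : ℤ) := by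
  obtain ⟨⟨⟨p, q⟩, i, j⟩, hx, rfl⟩ := mem_image.mp (Bset_eq_image ▸ hb)
  obtain ⟨hp, hq, hi, -⟩ := mem_bBox.mp hx
  rwa [bParam_fst_sub_one, Int.mul_add_ediv_sq hp (Int.sub_one_sub_mem_Ico hq)]

lemma Bset_snd_sub_one_ediv_mem_Ico {b : ℤ × ℤ} (hb : b ∈ Bset k) :
    (b.2 - 1) / (k : ℤ) ^ 2 ∈ Set.Ico 0 (k : ℤ) := by
  obtain ⟨⟨⟨p, q⟩, i, j⟩, hx, rfl⟩ := mem_image.mp (Bset_eq_image ▸ hb)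
  obtain ⟨hp, hq, -, hj⟩ := mem_bBox.mp hx
  rwa [bParam_snd_sub_one, Int.mul_add_ediv_sq hq hp]

def rankX (k : ℕ) (b : ℤ × ℤ) : ℤ := (b.1 - 1) * k + (b.2 - 1) / (k : ℤ) ^ 2

def rankY (k : ℕ) (b : ℤ × ℤ) : ℤ := (b.2 - 1) * k + (b.1 - 1) / (k : ℤ) ^ 2

lemma rankX_bParam {p q i j : ℤ} (h : ((p, q), (i, j)) ∈ bBox k) :
    rankX k (bParam k ((p, q), (i, j))) =
      (((i - 1) * k + (p - 1)) * k + (k - 1 - q)) * k + (j - 1) := by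
  obtain ⟨hp, hq, -, -⟩ := mem_bBox.mp h
  rw [rankX, bParam_fst_sub_one, bParam_snd_sub_one, Int.mul_add_ediv_sq hq hp]

lemma rankY_bParam {p q i j : ℤ} (h : ((p, q), (i, j)) ∈ bBox k) :
    rankY k (bParam k ((p, q), (i, j))) = (((j - 1) * k + q) * k + (p - 1)) * k + (i - 1) := by
  obtain ⟨hp, hq, -, -⟩ := mem_bBox.mp h
  rw [rankY, bParam_fst_sub_one, bParam_snd_sub_one,
    Int.mul_add_ediv_sq hp (Int.sub_one_sub_mem_Ico hq)]

lemma eq_of_rankX_bParam_eq {x x' : (ℤ × ℤ) × (ℤ × ℤ)} (hx : x ∈ bBox k) (hx' : x' ∈ bBox k)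
    (h : rankX k (bParam k x) = rankX k (bParam k x')) : x = x' := by
  obtain ⟨⟨p, q⟩, i, j⟩ := x
  obtain ⟨⟨p', q'⟩, i', j'⟩ := x'
  rw [rankX_bParam hx, rankX_bParam hx'] at h
  obtain ⟨hp, hq, -, hj⟩ := mem_bBox.mp hx
  obtain ⟨hp', hq', -, hj'⟩ := mem_bBox.mp hx'
  have := Int.eq_of_four_digits_eq hp (Int.sub_one_sub_mem_Ico hq) hj hp'
    (Int.sub_one_sub_mem_Ico hq') hj' h
  simp only [Prod.mk.injEq]
  omega

lemma eq_of_rankY_bParam_eq {x x' : (ℤ × ℤ) × (ℤ × ℤ)} (hx : x ∈ bBox k) (hx' : x' ∈ bBox k)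
    (h : rankY k (bParam k x) = rankY k (bParam k x')) : x = x' := by
  obtain ⟨⟨p, q⟩, i, j⟩ := x
  obtain ⟨⟨p', q'⟩, i', j'⟩ := x'
  rw [rankY_bParam hx, rankY_bParam hx'] at h
  obtain ⟨hp, hq, hi, -⟩ := mem_bBox.mp hx
  obtain ⟨hp', hq', hi', -⟩ := mem_bBox.mp hx'
  have := Int.eq_of_four_digits_eq hq hp hi hq' hp' hi' h
  simp only [Prod.mk.injEq]
  omega

lemma card_Bset : (Bset k).card = k ^ 4 := by
  rw [Bset_eq_image, card_image_of_injOn, card_bBox]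
  exact fun x hx x' hx' h => eq_of_rankX_bParam_eq hx hx' (congrArg (rankX k) h)

lemma rankX_injOn : Set.InjOn (rankX k) (Bset k) := by
  rw [Bset_eq_image, coe_image]
  rintro _ ⟨x, hx, rfl⟩ _ ⟨x', hx', rfl⟩ h
  rw [eq_of_rankX_bParam_eq hx hx' h]

lemma rankY_injOn : Set.InjOn (rankY k) (Bset k) := by
  rw [Bset_eq_image, coe_image]
  rintro _ ⟨x, hx, rfl⟩ _ ⟨x', hx', rfl⟩ h
  rw [eq_of_rankY_bParam_eq hx hx' h]

lemma rankX_mem_Ico {b : ℤ × ℤ} (hb : b ∈ Bset k) : rankX k b ∈ Set.Ico 0 ((k ^ 4 : ℕ) : ℤ) := by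
  obtain ⟨⟨⟨p, q⟩, i, j⟩, hx, rfl⟩ := mem_image.mp (Bset_eq_image ▸ hb)
  obtain ⟨hp, hq, hi, hj⟩ := mem_bBox.mp hx
  rw [rankX_bParam hx, Nat.cast_pow]
  exact Int.four_digits_mem_Ico hi hp (Int.sub_one_sub_mem_Ico hq) hj

lemma rankY_mem_Ico {b : ℤ × ℤ} (hb : b ∈ Bset k) : rankY k b ∈ Set.Ico 0 ((k ^ 4 : ℕ) : ℤ) := by
  obtain ⟨⟨⟨p, q⟩, i, j⟩, hx, rfl⟩ := mem_image.mp (Bset_eq_image ▸ hb)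
  obtain ⟨hp, hq, hi, hj⟩ := mem_bBox.mp hx
  rw [rankY_bParam hx, Nat.cast_pow]
  exact Int.four_digits_mem_Ico hj hq hp hi

end Bset

section Positions

variable {k : ℕ}

def aPos (k : ℕ) (i : Fin (k ^ 3)) : Fin (k ^ 4) :=
  ⟨i * k + (k - 1), by
    simpa [pow_succ] using Nat.mul_add_sub_one_lt_mul ((pow_pos_iff three_ne_zero).mp i.pos) i.2⟩

def cPos (k : ℕ) (j : Fin (k ^ 3)) : Fin (k ^ 4) :=
  ⟨j * k, by
    simpa [pow_succ] using Nat.mul_lt_mul_of_pos_right j.2 ((pow_pos_iff three_ne_zero).mp j.pos)⟩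

lemma aPos_injective : (aPos k).Injective := fun i i' h => by
  have : i * k + (k - 1) = i' * k + (k - 1) := congrArg Fin.val h
  exact Fin.ext (Nat.eq_of_mul_eq_mul_right ((pow_pos_iff three_ne_zero).mp i.pos) (by omega))

lemma cPos_injective : (cPos k).Injective := fun j _ h =>
  Fin.ext (Nat.eq_of_mul_eq_mul_right ((pow_pos_iff three_ne_zero).mp j.pos)
    (congrArg Fin.val h))

lemma aPos_lt_iff (i : Fin (k ^ 3)) {b : ℤ × ℤ} (hb : b ∈ Bset k) {m : Fin (k ^ 4)}
    (hm : (m : ℤ) = rankX k b) : aPos k i < m ↔ (i : ℤ) + 1 < b.1 := by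
  have hk : 1 ≤ k := (pow_pos_iff three_ne_zero).mp i.pos
  rw [Fin.lt_def, ← Int.ofNat_lt, hm, rankX, aPos]
  push_cast [hk]
  rw [Int.mul_add_sub_one_lt_mul_add_iff (Bset_snd_sub_one_ediv_mem_Ico hb)]
  omega

lemma lt_cPos_iff (j : Fin (k ^ 3)) {b : ℤ × ℤ} (hb : b ∈ Bset k) {m : Fin (k ^ 4)}
    (hm : (m : ℤ) = rankY k b) : m < cPos k j ↔ b.2 < (j : ℤ) + 1 := by
  rw [Fin.lt_def, ← Int.ofNat_lt, hm, rankY, cPos]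
  push_cast
  rw [Int.mul_add_lt_mul_iff (Bset_fst_sub_one_ediv_mem_Ico hb)]
  omega

end Positions

theorem Gk_induced_subgraph_of_ABC_general (k : ℕ) :
    ∃ (H : SimpleGraph (Fin 3 × Fin (k ^ 4))) (α β : Equiv.Perm (Fin (k ^ 4))),
      (∀ m : Fin 3, ∀ i j : Fin (k ^ 4), H.Adj (m, i) (m, j) ↔ i ≠ j) ∧
      (∀ i j, H.Adj (0, i) (1, j) ↔ i < α j) ∧
      (∀ i j, H.Adj (1, i) (2, j) ↔ β i < j) ∧
      (∀ i j, ¬ H.Adj (0, i) (2, j)) ∧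
      ∃ φ : Gk k ↪g H,
        (∀ i : Fin (k ^ 3), ∃ i', φ (Sum.inl i) = ((0 : Fin 3), i')) ∧
        (∀ b : { b : ℤ × ℤ // b ∈ Bset k }, ∃ b',
          φ (Sum.inr (Sum.inl b)) = ((1 : Fin 3), b')) ∧
        (∀ j : Fin (k ^ 3), ∃ j', φ (Sum.inr (Sum.inr j)) = ((2 : Fin 3), j')) := by
  obtain ⟨r, hr⟩ := Finset.exists_equiv_fin_of_injOn card_Bset rankX_injOn
    fun _ => rankX_mem_Ico
  obtain ⟨s, hs⟩ := Finset.exists_equiv_fin_of_injOn card_Bset rankY_injOn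
    fun _ => rankY_mem_Ico
  obtain ⟨φ, hφA, hφB, hφC⟩ := cliqueChain.exists_embedding_abcGraph aPos_injective
    cPos_injective r s (fun i b => (aPos_lt_iff i b.2 (hr b)).symm)
    (fun b j => (lt_cPos_iff j b.2 (hs b)).symm)
  rw [Gk_eq_cliqueChain]
  exact ⟨abcGraph (r.symm.trans s), 1, r.symm.trans s, abcGraph_adj_same _,
    abcGraph_adj_zero_one _, abcGraph_adj_one_two _, abcGraph_not_adj_zero_two _, φ,
    fun i => ⟨_, hφA i⟩, fun b => ⟨_, hφB b⟩, fun j => ⟨_, hφC j⟩⟩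

/-- `G_k` is an induced subgraph of an ABC graph: there is a graph `H` on three
cliques of size `k⁴` (parts `0`, `1`, `2` of `Fin 3 × Fin (k⁴)`), with no edges
between parts `0` and `2`, whose part `0`–part `1` edges and part `1`–part `2`
edges each form a half graph (under suitable orderings `α`, `β` of part `1`), and
a graph embedding of `G_k` into `H` sending `A` into part `0`, `B` into part `1`
and `C` into part `2`. -/
theorem Gk_induced_subgraph_of_ABC (k : ℕ) (hk : 2 ≤ k) :
    ∃ (H : SimpleGraph (Fin 3 × Fin (k ^ 4))) (α β : Equiv.Perm (Fin (k ^ 4))),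
      (∀ m : Fin 3, ∀ i j : Fin (k ^ 4), H.Adj (m, i) (m, j) ↔ i ≠ j) ∧
      (∀ i j, H.Adj (0, i) (1, j) ↔ i < α j) ∧
      (∀ i j, H.Adj (1, i) (2, j) ↔ β i < j) ∧
      (∀ i j, ¬ H.Adj (0, i) (2, j)) ∧
      ∃ φ : Gk k ↪g H,
        (∀ i : Fin (k ^ 3), ∃ i', φ (Sum.inl i) = ((0 : Fin 3), i')) ∧
        (∀ b : { b : ℤ × ℤ // b ∈ Bset k }, ∃ b',
          φ (Sum.inr (Sum.inl b)) = ((1 : Fin 3), b')) ∧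
        (∀ j : Fin (k ^ 3), ∃ j', φ (Sum.inr (Sum.inr j)) = ((2 : Fin 3), j')) :=
  Gk_induced_subgraph_of_ABC_general k
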